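/- arXiv:2410.11930 — 2 statements merged into one kernel-verified Lean document; each statement's English description precedes it below -/
import Mathlib

section
/- An ℓ-group G is a Yosida ℓ-group if and only if there exists a set 𝓜 of maximal convex ℓ-subgroups of G such that ⋂𝓜 = {0} and 𝓜 is dense in Spec(G) with respect to the patch topology. -/
/-!
Common definitions for lattice-ordered groups (ℓ-groups), written additively.
An ℓ-group is modeled as `[Lattice G] [AddGroup G]` together with the two
`CovariantClass` hypotheses expressing that translation is order-preserving.
-/

/-- The absolute value in an ℓ-group: `|g| = (g ⊔ 0) + ((-g) ⊔ 0)`. -/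
def labs {G : Type*} [Lattice G] [AddGroup G] (g : G) : G := (g ⊔ 0) + (-g ⊔ 0)

/-- A convex ℓ-subgroup of `G`: a subgroup which is a sublattice and is convex. -/
def IsConvexLSubgroup {G : Type*} [Lattice G] [AddGroup G] (H : Set G) : Prop :=
  (0 : G) ∈ H ∧ (∀ a ∈ H, -a ∈ H) ∧ (∀ a ∈ H, ∀ b ∈ H, a + b ∈ H) ∧
  (∀ a ∈ H, ∀ b ∈ H, a ⊔ b ∈ H) ∧ (∀ a ∈ H, ∀ b ∈ H, a ⊓ b ∈ H) ∧
  (∀ a ∈ H, ∀ b ∈ H, ∀ g : G, a ≤ g → g ≤ b → g ∈ H)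

/-- The polar `g^⊥ = {h : |h| ⊓ |g| = 0}`. -/
def polar {G : Type*} [Lattice G] [AddGroup G] (g : G) : Set G :=
  {h : G | labs h ⊓ labs g = 0}

/-- The double polar `g^{⊥⊥} = (g^⊥)^⊥ = {h : ∀ k ∈ g^⊥, |h| ⊓ |k| = 0}`. -/
def biPolar {G : Type*} [Lattice G] [AddGroup G] (g : G) : Set G :=
  {h : G | ∀ k ∈ polar g, labs h ⊓ labs k = 0}

/-- A d-subgroup: a convex ℓ-subgroup containing the double polar of each of its elements. -/
def IsDSubgroup {G : Type*} [Lattice G] [AddGroup G] (H : Set G) : Prop :=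
  IsConvexLSubgroup H ∧ ∀ h ∈ H, biPolar h ⊆ H

/-- A Martínez ℓ-group: every convex ℓ-subgroup is a d-subgroup. -/
def Martinez (G : Type*) [Lattice G] [AddGroup G] : Prop :=
  ∀ H : Set G, IsConvexLSubgroup H → IsDSubgroup H

/-- `G(g)`, the smallest convex ℓ-subgroup of `G` containing `g`. -/
def principalCLS {G : Type*} [Lattice G] [AddGroup G] (g : G) : Set G :=
  {x : G | ∀ H : Set G, IsConvexLSubgroup H → g ∈ H → x ∈ H}

/-- A prime subgroup: a proper convex ℓ-subgroup `P` with `a ⊓ b ∈ P → a ∈ P ∨ b ∈ P`. -/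
def IsPrimeSubgroup {G : Type*} [Lattice G] [AddGroup G] (P : Set G) : Prop :=
  IsConvexLSubgroup P ∧ P ≠ Set.univ ∧ ∀ a b : G, a ⊓ b ∈ P → a ∈ P ∨ b ∈ P

/-- A minimal prime subgroup. -/
def IsMinimalPrimeLSubgroup {G : Type*} [Lattice G] [AddGroup G] (P : Set G) : Prop :=
  IsPrimeSubgroup P ∧ ∀ Q : Set G, IsPrimeSubgroup Q → Q ⊆ P → Q = P

/-- `Spec(G)`, the set of prime subgroups of `G`, as a type. -/
abbrev SpecType (G : Type*) [Lattice G] [AddGroup G] : Type _ :=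
  {P : Set G // IsPrimeSubgroup P}

/-- `U(g) = {P ∈ Spec(G) : g ∉ P}`. -/
def Uset {G : Type*} [Lattice G] [AddGroup G] (g : G) : Set (SpecType G) :=
  {P : SpecType G | g ∉ P.1}

/-- `V(g) = {P ∈ Spec(G) : g ∈ P}`. -/
def Vset {G : Type*} [Lattice G] [AddGroup G] (g : G) : Set (SpecType G) :=
  {P : SpecType G | g ∈ P.1}

/-- The patch topology on `Spec(G)`, generated by all the sets `U(g)` and `V(g)`. -/
def patchTop (G : Type*) [Lattice G] [AddGroup G] : TopologicalSpace (SpecType G) :=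
  TopologicalSpace.generateFrom
    ({S : Set (SpecType G) | ∃ g : G, S = Uset g} ∪
      {S : Set (SpecType G) | ∃ g : G, S = Vset g})

/-- The hull-kernel topology on `Spec(G)`, with base `{U(g) : g ∈ G}`. -/
def hkTop (G : Type*) [Lattice G] [AddGroup G] : TopologicalSpace (SpecType G) :=
  TopologicalSpace.generateFrom {S : Set (SpecType G) | ∃ g : G, S = Uset g}

/-- A maximal (proper) convex ℓ-subgroup of `G`. -/
def IsMaxCLS {G : Type*} [Lattice G] [AddGroup G] (M : Set G) : Prop :=
  IsConvexLSubgroup M ∧ M ≠ Set.univ ∧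
    ∀ K : Set G, IsConvexLSubgroup K → K ≠ Set.univ → M ⊆ K → K = M

/-- A Yosida ℓ-group: every principal convex ℓ-subgroup is an intersection of
maximal convex ℓ-subgroups (the empty intersection being all of `G`). -/
def Yosida (G : Type*) [Lattice G] [AddGroup G] : Prop :=
  ∀ g : G, ∃ MM : Set (Set G), (∀ M ∈ MM, IsMaxCLS M) ∧ principalCLS g = ⋂₀ MM

section Aux

variable {G : Type*} [Lattice G] [AddGroup G]
  [CovariantClass G G (· + ·) (· ≤ ·)]
  [CovariantClass G G (Function.swap (· + ·)) (· ≤ ·)]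

lemma labs_nonneg (g : G) : 0 ≤ labs g := add_nonneg le_sup_right le_sup_right

lemma le_labs (g : G) : g ≤ labs g :=
  le_sup_left.trans (le_add_of_nonneg_right le_sup_right)

lemma neg_labs_le (g : G) : -labs g ≤ g := by
  have h : -labs g = (g ⊓ 0) + (-g ⊓ 0) := by
    rw [labs, neg_add_rev, neg_sup, neg_sup, neg_neg, neg_zero]
  rw [h]
  calc (g ⊓ 0) + (-g ⊓ 0) ≤ (g ⊓ 0) + 0 := add_le_add_right inf_le_right _
    _ = g ⊓ 0 := add_zero _
    _ ≤ g := inf_le_left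

variable {H : Set G}

lemma cls_between (h : IsConvexLSubgroup H) {a b g : G} (ha : a ∈ H) (hb : b ∈ H)
    (h1 : a ≤ g) (h2 : g ≤ b) : g ∈ H := h.2.2.2.2.2 a ha b hb g h1 h2

lemma cls_nonneg_le (h : IsConvexLSubgroup H) {g s : G} (hg : 0 ≤ g) (hgs : g ≤ s)
    (hs : s ∈ H) : g ∈ H := h.2.2.2.2.2 0 h.1 s hs g hg hgs

lemma cls_labs_mem (h : IsConvexLSubgroup H) {g : G} (hg : g ∈ H) : labs g ∈ H :=
  h.2.2.1 _ (h.2.2.2.1 _ hg _ h.1) _ (h.2.2.2.1 _ (h.2.1 _ hg) _ h.1)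

lemma cls_mem_of_labs (h : IsConvexLSubgroup H) {g : G} (hl : labs g ∈ H) : g ∈ H :=
  cls_between h (h.2.1 _ hl) hl (neg_labs_le g) (le_labs g)

lemma neg_antitone' {a b : G} (h : a ≤ b) : -b ≤ -a := by
  have h1 : -b + a + -a ≤ -b + b + -a := add_le_add_left (add_le_add_right h _) _
  simpa using h1

lemma inf_add_le3 {a s t : G} (ha : 0 ≤ a) (hs : 0 ≤ s) (ht : 0 ≤ t) :
    a ⊓ (s + t) ≤ (a ⊓ s) + (a ⊓ t) := by
  have h1 : (a ⊓ s) + (a ⊓ t) = ((a + a) ⊓ (s + a)) ⊓ ((a + t) ⊓ (s + t)) := by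
    rw [add_inf, inf_add, inf_add]
  rw [h1]
  refine le_inf (le_inf ?_ ?_) (le_inf ?_ ?_)
  · exact inf_le_left.trans (le_add_of_nonneg_right ha)
  · exact inf_le_left.trans (le_add_of_nonneg_left hs)
  · exact inf_le_left.trans (le_add_of_nonneg_right ht)
  · exact inf_le_right

/-- generating set for the convex ℓ-subgroup generated by `H` and `x`. -/
def genSet (H : Set G) (x : G) : Set G := {m | m ∈ H ∧ 0 ≤ m} ∪ {x}

lemma genClosure_nonneg {x : G} (hx : 0 ≤ x) {s : G}
    (hs : s ∈ AddSubmonoid.closure (genSet H x)) : 0 ≤ s := by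
  induction hs using AddSubmonoid.closure_induction with
  | mem y hy =>
    rcases hy with h | h
    · exact h.2
    · rw [Set.mem_singleton_iff] at h; exact h ▸ hx
  | zero => exact le_refl 0
  | add a b _ _ iha ihb => exact add_nonneg iha ihb

lemma inf_mem_of_mem_closure (hH : IsConvexLSubgroup H) {x a : G}
    (hx : 0 ≤ x) (ha : 0 ≤ a) (hax : a ⊓ x ∈ H) {s : G}
    (hs : s ∈ AddSubmonoid.closure (genSet H x)) : a ⊓ s ∈ H := by
  induction hs using AddSubmonoid.closure_induction with
  | mem y hy =>
    rcases hy with h | h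
    · exact cls_nonneg_le hH (le_inf ha h.2) inf_le_right h.1
    · rw [Set.mem_singleton_iff] at h; exact h ▸ hax
  | zero =>
    rw [inf_eq_right.mpr ha]
    exact hH.1
  | add s t hsc htc ihs iht =>
    have hs0 : 0 ≤ s := genClosure_nonneg hx hsc
    have ht0 : 0 ≤ t := genClosure_nonneg hx htc
    exact cls_between hH hH.1 (hH.2.2.1 _ ihs _ iht)
      (le_inf ha (add_nonneg hs0 ht0)) (inf_add_le3 ha hs0 ht0)

/-- convex ℓ-subgroup generated by `H` together with a positive element `x`. -/
def genC (H : Set G) (x : G) : Set G :=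
  {g | ∃ s ∈ AddSubmonoid.closure (genSet H x), -s ≤ g ∧ g ≤ s}

lemma subset_genC (hH : IsConvexLSubgroup H) {x : G} : H ⊆ genC H x := fun m hm =>
  ⟨labs m, AddSubmonoid.subset_closure (Or.inl ⟨cls_labs_mem hH hm, labs_nonneg m⟩),
    neg_labs_le m, le_labs m⟩

lemma mem_genC_self {x : G} (hx : 0 ≤ x) : x ∈ genC H x :=
  ⟨x, AddSubmonoid.subset_closure (Or.inr rfl), neg_nonpos.mpr hx |>.trans hx, le_refl x⟩

lemma genC_convex (hH : IsConvexLSubgroup H) {x : G} (hx : 0 ≤ x) :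
    IsConvexLSubgroup (genC H x) := by
  refine ⟨⟨0, AddSubmonoid.zero_mem _, by simp⟩, ?_, ?_, ?_, ?_, ?_⟩
  · rintro a ⟨s, hs, h1, h2⟩
    exact ⟨s, hs, neg_antitone' h2, (neg_antitone' h1).trans_eq (neg_neg s)⟩
  · rintro a ⟨s, hs, hs1, hs2⟩ b ⟨t, ht, ht1, ht2⟩
    have hs0 : 0 ≤ s := genClosure_nonneg hx hs
    have ht0 : 0 ≤ t := genClosure_nonneg hx ht
    refine ⟨s + t + s, (AddSubmonoid.closure _).add_mem ((AddSubmonoid.closure _).add_mem hs ht) hs, ?_, ?_⟩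
    · calc -(s + t + s) = (-s + -t) + -s := by rw [neg_add_rev, neg_add_rev, add_assoc]
        _ ≤ (-s + -t) + 0 := add_le_add_right (neg_nonpos.mpr hs0) _
        _ = -s + -t := add_zero _
        _ ≤ a + b := add_le_add hs1 ht1
    · calc a + b ≤ s + t := add_le_add hs2 ht2
        _ ≤ s + t + s := le_add_of_nonneg_right hs0
  · rintro a ⟨s, hs, hs1, hs2⟩ b ⟨t, ht, ht1, ht2⟩
    have hs0 : 0 ≤ s := genClosure_nonneg hx hs
    have ht0 : 0 ≤ t := genClosure_nonneg hx ht
    refine ⟨s + t, (AddSubmonoid.closure _).add_mem hs ht, ?_, ?_⟩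
    · calc -(s + t) = -t + -s := neg_add_rev s t
        _ ≤ 0 + -s := add_le_add_left (neg_nonpos.mpr ht0) _
        _ = -s := zero_add _
        _ ≤ a := hs1
        _ ≤ a ⊔ b := le_sup_left
    · exact sup_le (hs2.trans (le_add_of_nonneg_right ht0))
        (ht2.trans (le_add_of_nonneg_left hs0))
  · rintro a ⟨s, hs, hs1, hs2⟩ b ⟨t, ht, ht1, ht2⟩
    have hs0 : 0 ≤ s := genClosure_nonneg hx hs
    have ht0 : 0 ≤ t := genClosure_nonneg hx ht
    refine ⟨s + t, (AddSubmonoid.closure _).add_mem hs ht, ?_, ?_⟩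
    · refine le_inf ?_ ?_
      · calc -(s + t) = -t + -s := neg_add_rev s t
          _ ≤ 0 + -s := add_le_add_left (neg_nonpos.mpr ht0) _
          _ = -s := zero_add _
          _ ≤ a := hs1
      · calc -(s + t) = -t + -s := neg_add_rev s t
          _ ≤ -t + 0 := add_le_add_right (neg_nonpos.mpr hs0) _
          _ = -t := add_zero _
          _ ≤ b := ht1
    · exact inf_le_left.trans (hs2.trans (le_add_of_nonneg_right ht0))
  · rintro a ⟨s, hs, hs1, hs2⟩ b ⟨t, ht, ht1, ht2⟩ g h1 h2
    have hs0 : 0 ≤ s := genClosure_nonneg hx hs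
    have ht0 : 0 ≤ t := genClosure_nonneg hx ht
    refine ⟨s + t, (AddSubmonoid.closure _).add_mem hs ht, ?_, ?_⟩
    · calc -(s + t) = -t + -s := neg_add_rev s t
        _ ≤ 0 + -s := add_le_add_left (neg_nonpos.mpr ht0) _
        _ = -s := zero_add _
        _ ≤ a := hs1
        _ ≤ g := h1
    · calc g ≤ b := h2
        _ ≤ t := ht2
        _ ≤ s + t := le_add_of_nonneg_left hs0
  
lemma value_isPrime {P : Set G} {w : G} (hP : IsConvexLSubgroup P) (hw : w ∉ P)
    (hmax : ∀ K : Set G, IsConvexLSubgroup K → P ⊆ K → K ≠ P → w ∈ K) :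
    IsPrimeSubgroup P := by
  refine ⟨hP, fun h => hw (h.symm ▸ Set.mem_univ w), ?_⟩
  intro a b hab
  by_contra hcon
  push_neg at hcon
  obtain ⟨ha, hb⟩ := hcon
  set c := a ⊓ b with hc
  set u := -c + a with hu
  set v := -c + b with hv
  have hu0 : 0 ≤ u := by
    have := add_le_add_right (inf_le_left : c ≤ a) (-c)
    rwa [neg_add_cancel] at this
  have hv0 : 0 ≤ v := by
    have := add_le_add_right (inf_le_right : c ≤ b) (-c)
    rwa [neg_add_cancel] at this
  have huv : u ⊓ v = 0 := by
    rw [hu, hv, ← add_inf, hc, neg_add_cancel]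
  have huP : u ∉ P := by
    intro h
    exact ha (by simpa [hu, add_neg_cancel_left] using hP.2.2.1 c hab u h)
  have hvP : v ∉ P := by
    intro h
    exact hb (by simpa [hv, add_neg_cancel_left] using hP.2.2.1 c hab v h)
  have hwu : w ∈ genC P u := hmax _ (genC_convex hP hu0) (subset_genC hP)
    (fun h => huP (h ▸ mem_genC_self hu0))
  have hwv : w ∈ genC P v := hmax _ (genC_convex hP hv0) (subset_genC hP)
    (fun h => hvP (h ▸ mem_genC_self hv0))
  obtain ⟨s, hsc, hs1, hs2⟩ := hwu
  obtain ⟨t, htc, ht1, ht2⟩ := hwv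
  have hvu : v ⊓ u ∈ P := by rw [inf_comm, huv]; exact hP.1
  have hsv : s ⊓ v ∈ P := by
    rw [inf_comm]
    exact inf_mem_of_mem_closure hP hu0 hv0 hvu hsc
  have hst : s ⊓ t ∈ P :=
    inf_mem_of_mem_closure hP hv0 (genClosure_nonneg hu0 hsc) hsv htc
  refine hw (cls_between hP (hP.2.1 _ hst) hst ?_ (le_inf hs2 ht2))
  rw [neg_inf]
  exact sup_le hs1 ht1

lemma exists_value {w : G} (hH : IsConvexLSubgroup H) (hw : w ∉ H) :
    ∃ P : Set G, IsConvexLSubgroup P ∧ H ⊆ P ∧ w ∉ P ∧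
      ∀ K : Set G, IsConvexLSubgroup K → P ⊆ K → K ≠ P → w ∈ K := by
  have hub : ∀ c ⊆ {K : Set G | IsConvexLSubgroup K ∧ w ∉ K}, IsChain (· ⊆ ·) c →
      c.Nonempty → ∃ ub ∈ {K : Set G | IsConvexLSubgroup K ∧ w ∉ K}, ∀ s ∈ c, s ⊆ ub := by
    intro c hcS hchain hcne
    obtain ⟨K0, hK0⟩ := hcne
    refine ⟨⋃₀ c, ⟨⟨?_, ?_, ?_, ?_, ?_, ?_⟩, ?_⟩, fun s hs => Set.subset_sUnion_of_mem hs⟩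
    · exact ⟨K0, hK0, (hcS hK0).1.1⟩
    · rintro a ⟨K, hK, haK⟩
      exact ⟨K, hK, (hcS hK).1.2.1 a haK⟩
    · rintro a ⟨K1, hK1, ha⟩ b ⟨K2, hK2, hb⟩
      rcases hchain.total hK1 hK2 with h | h
      · exact ⟨K2, hK2, (hcS hK2).1.2.2.1 a (h ha) b hb⟩
      · exact ⟨K1, hK1, (hcS hK1).1.2.2.1 a ha b (h hb)⟩
    · rintro a ⟨K1, hK1, ha⟩ b ⟨K2, hK2, hb⟩
      rcases hchain.total hK1 hK2 with h | h
      · exact ⟨K2, hK2, (hcS hK2).1.2.2.2.1 a (h ha) b hb⟩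
      · exact ⟨K1, hK1, (hcS hK1).1.2.2.2.1 a ha b (h hb)⟩
    · rintro a ⟨K1, hK1, ha⟩ b ⟨K2, hK2, hb⟩
      rcases hchain.total hK1 hK2 with h | h
      · exact ⟨K2, hK2, (hcS hK2).1.2.2.2.2.1 a (h ha) b hb⟩
      · exact ⟨K1, hK1, (hcS hK1).1.2.2.2.2.1 a ha b (h hb)⟩
    · rintro a ⟨K1, hK1, ha⟩ b ⟨K2, hK2, hb⟩ g h1 h2
      rcases hchain.total hK1 hK2 with h | h
      · exact ⟨K2, hK2, (hcS hK2).1.2.2.2.2.2 a (h ha) b hb g h1 h2⟩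
      · exact ⟨K1, hK1, (hcS hK1).1.2.2.2.2.2 a ha b (h hb) g h1 h2⟩
    · rintro ⟨K, hK, hwK⟩
      exact (hcS hK).2 hwK
  obtain ⟨P, hHP, hPmax⟩ := zorn_subset_nonempty
    {K : Set G | IsConvexLSubgroup K ∧ w ∉ K} hub H ⟨hH, hw⟩
  refine ⟨P, hPmax.1.1, hHP, hPmax.1.2, ?_⟩
  intro K hK hPK hne
  by_contra hwK
  exact hne (Set.Subset.antisymm (hPmax.2 ⟨hK, hwK⟩ hPK) hPK)

lemma isMax_isPrime {M : Set G} (hM : IsMaxCLS M) : IsPrimeSubgroup M := by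
  obtain ⟨a, ha⟩ := (Set.ne_univ_iff_exists_notMem _).mp hM.2.1
  refine value_isPrime hM.1 ha ?_
  intro K hK hMK hne
  by_cases hKu : K = Set.univ
  · rw [hKu]; exact Set.mem_univ a
  · exact absurd (hM.2.2 K hK hKu hMK) hne

end Aux

/-- `G` is a Yosida ℓ-group iff there is a set `𝓜` of maximal
convex ℓ-subgroups with `⋂𝓜 = {0}` which is patch-dense in `Spec(G)`. -/
theorem stmt_15 {G : Type*} [Lattice G] [AddGroup G]
    [CovariantClass G G (· + ·) (· ≤ ·)]
    [CovariantClass G G (Function.swap (· + ·)) (· ≤ ·)] :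
    Yosida G ↔
      ∃ MM : Set (Set G), (∀ M ∈ MM, IsMaxCLS M) ∧ ⋂₀ MM = {(0 : G)} ∧
        @Dense (SpecType G) (patchTop G) {P : SpecType G | P.1 ∈ MM} := by
  constructor
  · intro hY
    refine ⟨{M : Set G | IsMaxCLS M}, fun M hM => hM, ?_, ?_⟩
    · -- intersection is {0}
      have hz : IsConvexLSubgroup ({0} : Set G) := by
        refine ⟨rfl, ?_, ?_, ?_, ?_, ?_⟩
        · intro a ha; simp_all
        · intro a ha b hb; simp_all
        · intro a ha b hb; simp_all
        · intro a ha b hb; simp_all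
        · intro a ha b hb g h1 h2
          simp only [Set.mem_singleton_iff] at *
          subst ha; subst hb
          exact le_antisymm h2 h1
      apply Set.Subset.antisymm
      · intro x hx
        obtain ⟨MM0, hMM0, h0⟩ := hY 0
        have hx0 : x ∈ principalCLS (0 : G) := by
          rw [h0]
          exact Set.mem_sInter.mpr fun M hM => Set.mem_sInter.mp hx M (hMM0 M hM)
        exact hx0 {0} hz rfl
      · rintro x rfl
        exact Set.mem_sInter.mpr fun M hM => hM.1.1
    · -- density
      letI : TopologicalSpace (SpecType G) := patchTop G
      have hb := TopologicalSpace.isTopologicalBasis_of_subbasis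
        (t := patchTop G) (s := {S : Set (SpecType G) | ∃ g : G, S = Uset g} ∪
          {S : Set (SpecType G) | ∃ g : G, S = Vset g}) rfl
      rw [hb.dense_iff]
      rintro o ⟨f, ⟨hfin, hfsub⟩, rfl⟩ ⟨P, hP⟩
      have key : ∀ f' : Set (Set (SpecType G)), f'.Finite →
          f' ⊆ ({S : Set (SpecType G) | ∃ g : G, S = Uset g} ∪
            {S : Set (SpecType G) | ∃ g : G, S = Vset g}) → P ∈ ⋂₀ f' →
          ∃ a b : G, a ∉ P.1 ∧ b ∈ P.1 ∧
            ∀ Q : SpecType G, a ∉ Q.1 → b ∈ Q.1 → Q ∈ ⋂₀ f' := by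
        intro f' hf'
        refine Set.Finite.induction_on (motive := fun fs _ =>
          fs ⊆ ({S : Set (SpecType G) | ∃ g : G, S = Uset g} ∪
            {S : Set (SpecType G) | ∃ g : G, S = Vset g}) → P ∈ ⋂₀ fs →
          ∃ a b : G, a ∉ P.1 ∧ b ∈ P.1 ∧
            ∀ Q : SpecType G, a ∉ Q.1 → b ∈ Q.1 → Q ∈ ⋂₀ fs) f' hf' ?_ ?_
        · intro _ _
          obtain ⟨a, ha⟩ := (Set.ne_univ_iff_exists_notMem _).mp P.2.2.1
          exact ⟨a, 0, ha, P.2.1.1, fun Q _ _ => by simp⟩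
        · intro S f'' hS hfin'' IH hsub hPmem
          obtain ⟨a, b, ha, hbm, hQ⟩ := IH (fun t ht => hsub (Set.mem_insert_of_mem _ ht))
            (fun t ht => hPmem t (Set.mem_insert_of_mem _ ht))
          have hPS : P ∈ S := hPmem S (Set.mem_insert _ _)
          rcases hsub (Set.mem_insert _ _) with ⟨g, rfl⟩ | ⟨g, rfl⟩
          · -- S = Uset g
            refine ⟨labs a ⊓ labs g, b, ?_, hbm, ?_⟩
            · intro hmem
              rcases P.2.2.2 _ _ hmem with h | h
              · exact ha (cls_mem_of_labs P.2.1 h)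
              · exact hPS (cls_mem_of_labs P.2.1 h)
            · intro Q hna hQb
              have haQ : a ∉ Q.1 := fun h => hna (cls_nonneg_le Q.2.1
                (le_inf (labs_nonneg a) (labs_nonneg g)) inf_le_left (cls_labs_mem Q.2.1 h))
              have hgQ : g ∉ Q.1 := fun h => hna (cls_nonneg_le Q.2.1
                (le_inf (labs_nonneg a) (labs_nonneg g)) inf_le_right (cls_labs_mem Q.2.1 h))
              intro t ht
              rcases Set.mem_insert_iff.mp ht with rfl | ht'
              · exact hgQ
              · exact hQ Q haQ hQb t ht'
          · -- S = Vset g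
            refine ⟨a, labs b ⊔ labs g, ha,
              P.2.1.2.2.2.1 _ (cls_labs_mem P.2.1 hbm) _ (cls_labs_mem P.2.1 hPS), ?_⟩
            intro Q haQ hsupQ
            have hbQ : b ∈ Q.1 := cls_mem_of_labs Q.2.1
              (cls_nonneg_le Q.2.1 (labs_nonneg b) le_sup_left hsupQ)
            have hgQ : g ∈ Q.1 := cls_mem_of_labs Q.2.1
              (cls_nonneg_le Q.2.1 (labs_nonneg g) le_sup_right hsupQ)
            intro t ht
            rcases Set.mem_insert_iff.mp ht with rfl | ht'
            · exact hgQ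
            · exact hQ Q haQ hbQ t ht'
      obtain ⟨a, b, haP, hbP, hsub⟩ := key f hfin hfsub hP
      have hab : a ∉ principalCLS b := fun h => haP (h P.1 P.2.1 hbP)
      obtain ⟨MM, hMMmax, hMMeq⟩ := hY b
      have hex : ¬ ∀ M ∈ MM, a ∈ M := fun h =>
        hab (by rw [hMMeq]; exact Set.mem_sInter.mpr h)
      push_neg at hex
      obtain ⟨M, hMmm, haM⟩ := hex
      have hbM : b ∈ M := by
        have hb' : b ∈ principalCLS b := fun H hH hbH => hbH
        rw [hMMeq] at hb'
        exact Set.mem_sInter.mp hb' M hMmm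
      have hMp : IsPrimeSubgroup M := isMax_isPrime (hMMmax M hMmm)
      exact ⟨⟨M, hMp⟩, hsub ⟨M, hMp⟩ haM hbM, hMMmax M hMmm⟩
  · rintro ⟨MM, hmax, _, hdense⟩ g
    refine ⟨{M : Set G | M ∈ MM ∧ g ∈ M}, fun M hM => hmax M hM.1, ?_⟩
    apply Set.Subset.antisymm
    · intro x hx
      exact Set.mem_sInter.mpr fun M hM => hx M (hmax M hM.1).1 hM.2
    · intro x hx H hH hgH
      by_contra hxH
      obtain ⟨P, hPc, hHP, hxP, hPmax⟩ := exists_value hH hxH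
      have hPp : IsPrimeSubgroup P := value_isPrime hPc hxP hPmax
      letI : TopologicalSpace (SpecType G) := patchTop G
      have hopen : IsOpen (Uset x ∩ Vset g) :=
        (TopologicalSpace.isOpen_generateFrom_of_mem (Or.inl ⟨x, rfl⟩)).inter
          (TopologicalSpace.isOpen_generateFrom_of_mem (Or.inr ⟨g, rfl⟩))
      have hne : (Uset x ∩ Vset g).Nonempty := ⟨⟨P, hPp⟩, hxP, hHP hgH⟩
      obtain ⟨Q, ⟨hQx, hQg⟩, hQMM⟩ := dense_iff_inter_open.mp hdense _ hopen hne
      exact hQx (Set.mem_sInter.mp hx Q.1 ⟨hQMM, hQg⟩)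
end

section
/- Let G be an ℓ-group with enough maximal convex ℓ-subgroups, i.e., ⋂Max(G) = {0}. If G is a Martínez ℓ-group, then G is a Yosida ℓ-group. -/
section Aux
variable {G : Type*} [Lattice G] [AddGroup G]
    [CovariantClass G G (· + ·) (· ≤ ·)]
    [CovariantClass G G (Function.swap (· + ·)) (· ≤ ·)]

lemma labs_eq_abs (g : G) : labs g = |g| := posPart_add_negPart g

lemma aux_neg_swap {a c : G} (h : -a ≤ c) : -c ≤ a := by
  have h2 := neg_le_neg_iff.2 h
  simpa using h2

lemma aux_abs_le {a c : G} (h1 : a ≤ c) (h2 : -a ≤ c) : |a| ≤ c := abs_le'.2 ⟨h1, h2⟩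

/-- Birkhoff: for positive elements, `a ⊓ (b + c) ≤ (a ⊓ b) + (a ⊓ c)`. -/
lemma inf_add_le_of_nonneg {a b c : G} (ha : 0 ≤ a) (hb : 0 ≤ b) (hc : 0 ≤ c) :
    a ⊓ (b + c) ≤ (a ⊓ b) + (a ⊓ c) := by
  have key : (a ⊓ b) + (a ⊓ c) = ((a + a) ⊓ (a + c)) ⊓ ((b + a) ⊓ (b + c)) := by
    rw [inf_add, add_inf, add_inf]
  rw [key]
  refine le_inf (le_inf ?_ ?_) (le_inf ?_ ?_)
  · exact inf_le_left.trans (le_add_of_nonneg_right ha)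
  · exact inf_le_left.trans (le_add_of_nonneg_right hc)
  · exact inf_le_left.trans (le_add_of_nonneg_left hb)
  · exact inf_le_right

lemma abs_mem_of_mem {H : Set G} (hH : IsConvexLSubgroup H) {x : G} (hx : x ∈ H) :
    |x| ∈ H :=
  hH.2.2.2.1 x hx (-x) (hH.2.1 x hx)

lemma mem_of_abs_le_mem {H : Set G} (hH : IsConvexLSubgroup H) {x y : G}
    (hy : y ∈ H) (hxy : |x| ≤ y) : x ∈ H :=
  hH.2.2.2.2.2 (-y) (hH.2.1 y hy) y hy x (aux_neg_swap ((neg_le_abs x).trans hxy))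
    ((le_abs_self x).trans hxy)

/-- Maximal convex ℓ-subgroups are prime. -/
lemma max_prime {M : Set G} (hmax : IsMaxCLS M) {a b : G} (ha : 0 ≤ a) (hb : 0 ≤ b)
    (hab : a ⊓ b = 0) (haM : a ∉ M) : b ∈ M := by
  classical
  set N := AddSubmonoid.closure ((M ∩ {x : G | 0 ≤ x}) ∪ {a}) with hN
  set S := {x : G | ∃ s, s ∈ N ∧ |x| ≤ s} with hSdef
  have habs0 : |(0 : G)| = (0 : G) := abs_of_nonneg le_rfl
  have hS : IsConvexLSubgroup S := by
    refine ⟨⟨0, N.zero_mem, habs0.le⟩, ?_, ?_, ?_, ?_, ?_⟩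
    · rintro x ⟨s, hs, hxs⟩
      exact ⟨s, hs, by rwa [abs_neg]⟩
    · rintro x ⟨s, hs, hxs⟩ y ⟨t, ht, hyt⟩
      have hs0 : (0 : G) ≤ s := (abs_nonneg x).trans hxs
      refine ⟨s + t + s, N.add_mem (N.add_mem hs ht) hs, aux_abs_le ?_ ?_⟩
      · calc x + y ≤ s + t := add_le_add ((le_abs_self x).trans hxs)
                      ((le_abs_self y).trans hyt)
          _ ≤ s + t + s := le_add_of_nonneg_right hs0
      · calc -(x + y) = -y + -x := neg_add_rev _ _
          _ ≤ t + s := add_le_add ((neg_le_abs y).trans hyt) ((neg_le_abs x).trans hxs)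
          _ ≤ s + (t + s) := le_add_of_nonneg_left hs0
          _ = s + t + s := (add_assoc _ _ _).symm
    · rintro x ⟨s, hs, hxs⟩ y ⟨t, ht, hyt⟩
      have hs0 : (0 : G) ≤ s := (abs_nonneg x).trans hxs
      have ht0 : (0 : G) ≤ t := (abs_nonneg y).trans hyt
      refine ⟨s + t, N.add_mem hs ht, aux_abs_le (sup_le ?_ ?_) ?_⟩
      · exact ((le_abs_self x).trans hxs).trans (le_add_of_nonneg_right ht0)
      · exact ((le_abs_self y).trans hyt).trans (le_add_of_nonneg_left hs0)
      · exact ((neg_le_neg_iff.2 le_sup_left).trans ((neg_le_abs x).trans hxs)).trans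
          (le_add_of_nonneg_right ht0)
    · rintro x ⟨s, hs, hxs⟩ y ⟨t, ht, hyt⟩
      have hs0 : (0 : G) ≤ s := (abs_nonneg x).trans hxs
      have ht0 : (0 : G) ≤ t := (abs_nonneg y).trans hyt
      refine ⟨s + t, N.add_mem hs ht, aux_abs_le ?_ ?_⟩
      · exact inf_le_left.trans (((le_abs_self x).trans hxs).trans
          (le_add_of_nonneg_right ht0))
      · rw [neg_inf]
        refine sup_le ?_ ?_
        · exact ((neg_le_abs x).trans hxs).trans (le_add_of_nonneg_right ht0)
        · exact ((neg_le_abs y).trans hyt).trans (le_add_of_nonneg_left hs0)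
    · rintro u ⟨s, hs, hus⟩ v ⟨t, ht, hvt⟩ x hux hxv
      have hs0 : (0 : G) ≤ s := (abs_nonneg u).trans hus
      have ht0 : (0 : G) ≤ t := (abs_nonneg v).trans hvt
      refine ⟨s + t, N.add_mem hs ht, aux_abs_le ?_ ?_⟩
      · exact (hxv.trans ((le_abs_self v).trans hvt)).trans (le_add_of_nonneg_left hs0)
      · have : -x ≤ -u := neg_le_neg_iff.2 hux
        exact (this.trans ((neg_le_abs u).trans hus)).trans (le_add_of_nonneg_right ht0)
  have hMS : M ⊆ S := by
    intro m hm
    have habsm : |m| ∈ M := abs_mem_of_mem hmax.1 hm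
    exact ⟨|m|, AddSubmonoid.subset_closure (Or.inl ⟨habsm, abs_nonneg m⟩), le_rfl⟩
  have haS : a ∈ S :=
    ⟨a, AddSubmonoid.subset_closure (Or.inr rfl), (abs_of_nonneg ha).le⟩
  have hSuniv : S = Set.univ := by
    by_contra hne
    exact haM ((hmax.2.2 S hS hne hMS) ▸ haS)
  obtain ⟨s, hsN, hbs⟩ : b ∈ S := hSuniv ▸ Set.mem_univ b
  have hbs' : b ≤ s := (le_abs_self b).trans hbs
  -- by induction on the closure, `b ⊓ s ∈ M` and `0 ≤ s`
  have key : ∀ s ∈ N, 0 ≤ s ∧ b ⊓ s ∈ M := by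
    intro s hsN
    induction hsN using AddSubmonoid.closure_induction with
    | mem x hx =>
      rcases hx with ⟨hxM, hx0⟩ | hxa
      · refine ⟨hx0, hmax.1.2.2.2.2.2 0 hmax.1.1 x hxM (b ⊓ x)
          (le_inf hb hx0) inf_le_right⟩
      · rw [Set.mem_singleton_iff] at hxa
        refine ⟨hxa ▸ ha, ?_⟩
        rw [hxa, inf_comm b a, hab]
        exact hmax.1.1
    | zero => exact ⟨le_rfl, by rw [inf_eq_right.2 hb]; exact hmax.1.1⟩
    | add x y hx hy ihx ihy =>
      refine ⟨add_nonneg ihx.1 ihy.1, ?_⟩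
      have hsum : (b ⊓ x) + (b ⊓ y) ∈ M := hmax.1.2.2.1 _ ihx.2 _ ihy.2
      exact hmax.1.2.2.2.2.2 0 hmax.1.1 _ hsum (b ⊓ (x + y))
        (le_inf hb (add_nonneg ihx.1 ihy.1)) (inf_add_le_of_nonneg hb ihx.1 ihy.1)
  have : b ⊓ s ∈ M := (key s hsN).2
  rwa [inf_eq_left.2 hbs'] at this

lemma principalCLS_isConvex (g : G) : IsConvexLSubgroup (principalCLS g) := by
  refine ⟨fun H hH _ => hH.1, fun a ha H hH hg => hH.2.1 a (ha H hH hg),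
    fun a ha b hb H hH hg => hH.2.2.1 a (ha H hH hg) b (hb H hH hg),
    fun a ha b hb H hH hg => hH.2.2.2.1 a (ha H hH hg) b (hb H hH hg),
    fun a ha b hb H hH hg => hH.2.2.2.2.1 a (ha H hH hg) b (hb H hH hg),
    fun a ha b hb x hax hxb H hH hg =>
      hH.2.2.2.2.2 a (ha H hH hg) b (hb H hH hg) x hax hxb⟩

lemma self_mem_principalCLS (g : G) : g ∈ principalCLS g := fun _ _ hg => hg

end Aux

/-- if `G` has enough maximal convex ℓ-subgroups
(`⋂ Max(G) = {0}`) and `G` is Martínez, then `G` is Yosida. -/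
theorem stmt_17 {G : Type*} [Lattice G] [AddGroup G]
    [CovariantClass G G (· + ·) (· ≤ ·)]
    [CovariantClass G G (Function.swap (· + ·)) (· ≤ ·)]
    (hemc : ⋂₀ {M : Set G | IsMaxCLS M} = {(0 : G)}) (hM : Martinez G) :
    Yosida G := by
  intro g
  refine ⟨{M : Set G | IsMaxCLS M ∧ g ∈ M}, fun M hM => hM.1, ?_⟩
  apply Set.eq_of_subset_of_subset
  · intro x hx M hM
    exact hx M hM.1.1 hM.2
  · intro x hx
    -- `principalCLS g` is a d-subgroup, so it contains `biPolar g`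
    have hd : IsDSubgroup (principalCLS g) := hM _ (principalCLS_isConvex g)
    apply hd.2 g (self_mem_principalCLS g)
    -- show `x ∈ biPolar g`
    intro k hk
    rw [labs_eq_abs, labs_eq_abs]
    rw [polar, Set.mem_setOf_eq, labs_eq_abs, labs_eq_abs] at hk
    by_contra hw
    set w := |x| ⊓ |k| with hwdef
    have hw0 : (0 : G) ≤ w := le_inf (abs_nonneg x) (abs_nonneg k)
    -- find a maximal convex ℓ-subgroup avoiding w
    have hwnot : w ∉ ⋂₀ {M : Set G | IsMaxCLS M} := by
      rw [hemc]
      exact hw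
    obtain ⟨M, hMmax, hwM⟩ : ∃ M : Set G, IsMaxCLS M ∧ w ∉ M := by
      by_contra hcon
      push_neg at hcon
      exact hwnot fun M hM => hcon M hM
    -- `g ∈ M` by primeness
    have hwg : w ⊓ |g| = 0 := by
      apply le_antisymm
      · calc w ⊓ |g| ≤ |k| ⊓ |g| := inf_le_inf_right _ inf_le_right
          _ = 0 := hk
      · exact le_inf hw0 (abs_nonneg g)
    have hgM : g ∈ M :=
      mem_of_abs_le_mem hMmax.1 (max_prime hMmax hw0 (abs_nonneg g) hwg hwM) le_rfl
    -- hence `x ∈ M`, so `w ∈ M`, contradiction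
    have hxM : x ∈ M := hx M ⟨hMmax, hgM⟩
    exact hwM (hMmax.1.2.2.2.2.2 0 hMmax.1.1 _ (abs_mem_of_mem hMmax.1 hxM) w hw0
      inf_le_left)
end
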